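/- arXiv:math/0509360 — 2 statements merged into one kernel-verified Lean document; each statement's English description precedes it below -/
import Mathlib

section
/- Let (S_j)_{j=0}^{N-1} be a representation of the Cuntz algebra 𝒪_N on H, let f ∈ H with ‖f‖ = 1, and let μ_f be a spectral measure of f on [0,1). Then the sequence of measures μ_f^{(k)} converges weakly to μ_f: for every continuous function ψ : [0,1] → ℂ, lim_{k→∞} ∫ ψ dμ_f^{(k)} = ∫ ψ dμ_f. -/
open MeasureTheory ContinuousLinearMap
open scoped InnerProductSpace

variable {H : Type*} [NormedAddCommGroup H] [InnerProductSpace ℂ H] [CompleteSpace H]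

/-- The word operator `S_α = S_{α 1} ⋯ S_{α k}` associated to a multi-index
`α ∈ {0,…,N-1}^k`. -/
noncomputable def Sw {N : ℕ} (S : Fin N → H →L[ℂ] H) {k : ℕ} (α : Fin k → Fin N) :
    H →L[ℂ] H :=
  (List.ofFn fun i => S (α i)).prod

/-- A family `S_0, …, S_{N-1}` of bounded operators is a representation of the Cuntz
algebra `𝒪_N` if `S_j^* S_k = δ_{jk} I` and `∑ j, S_j S_j^* = I`. -/
def CuntzRep {N : ℕ} (S : Fin N → H →L[ℂ] H) : Prop :=
  (∀ j k : Fin N, adjoint (S j) ∘L S k = if j = k then 1 else 0) ∧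
    ∑ j : Fin N, S j ∘L adjoint (S j) = 1

/-- `x_k(α) = α_1/N + α_2/N² + ⋯ + α_k/N^k`. -/
noncomputable def xk (N : ℕ) {k : ℕ} (α : Fin k → Fin N) : ℝ :=
  ∑ i : Fin k, (α i : ℝ) / (N : ℝ) ^ ((i : ℕ) + 1)

/-- The `N`-adic interval `I_k(α) = [x_k(α), x_k(α) + N^{-k})`. -/
noncomputable def Ik (N : ℕ) {k : ℕ} (α : Fin k → Fin N) : Set ℝ :=
  Set.Ico (xk N α) (xk N α + ((N : ℝ) ^ k)⁻¹)

/-- A Borel measure `μ` on `[0,1)` is a spectral measure of `g` if `μ([0,1)) = ‖g‖²`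
and `μ(I_k(α)) = ‖S_α^* g‖²` for every `k ≥ 1` and multi-index `α`. -/
def IsSpectralMeasureR {N : ℕ} (S : Fin N → H →L[ℂ] H) (g : H) (μ : Measure ℝ) : Prop :=
  μ (Set.Ico (0:ℝ) 1)ᶜ = 0 ∧ μ Set.univ = ENNReal.ofReal (‖g‖ ^ 2) ∧
    ∀ k : ℕ, 1 ≤ k → ∀ α : Fin k → Fin N,
      μ (Ik N α) = ENNReal.ofReal (‖adjoint (Sw S α) g‖ ^ 2)

/-- The atomic measure `μ_f^{(k)} = ∑_α ‖S_α^* f‖² δ_{x_k(α)}`. -/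
noncomputable def muk {N : ℕ} (S : Fin N → H →L[ℂ] H) (f : H) (k : ℕ) : Measure ℝ :=
  ∑ α : Fin k → Fin N,
    ENNReal.ofReal (‖adjoint (Sw S α) f‖ ^ 2) • Measure.dirac (xk N α)

/-!
For `k ≥ 1` the intervals `I_k(α)` partition `[0,1)`, the atom `x_k(α)` of `μ_f^{(k)}` lies in
`I_k(α)`, and its weight `‖S_α^* f‖²` is exactly `μ_f(I_k(α))`. So `∫ ψ dμ_f^{(k)}` is a Riemann
sum for `∫ ψ dμ_f` over a partition of mesh `N^{-k}`, and the two differ by at most the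
oscillation of `ψ` at scale `N^{-k}` times `μ_f([0,1)) ≤ 1`, which tends to `0` by uniform
continuity of `ψ` on `[0,1]`.
-/

namespace MeasureTheory

variable {X ι E : Type*} [MeasurableSpace X] [Fintype ι]
  [NormedAddCommGroup E] [NormedSpace ℝ E] [CompleteSpace E]

theorem norm_sum_measureReal_smul_sub_setIntegral_le {μ : Measure X} [IsFiniteMeasure μ]
    {A : ι → Set X} (hA : ∀ i, MeasurableSet (A i)) (hAd : Pairwise (Function.onFun Disjoint A))
    {g : X → E} (hg : IntegrableOn g (⋃ i, A i) μ) (x : ι → X) {C : ℝ}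
    (hC : ∀ i, ∀ y ∈ A i, ‖g (x i) - g y‖ ≤ C) :
    ‖∑ i, μ.real (A i) • g (x i) - ∫ y in ⋃ i, A i, g y ∂μ‖ ≤ C * μ.real (⋃ i, A i) := by
  have hgA : ∀ i, IntegrableOn g (A i) μ := fun i => hg.mono_set (Set.subset_iUnion A i)
  have hpiece : ∀ i, μ.real (A i) • g (x i) - ∫ y in A i, g y ∂μ
      = ∫ y in A i, (g (x i) - g y) ∂μ := fun i => by
    rw [integral_sub (integrable_const _) (hgA i), setIntegral_const]
  calc ‖∑ i, μ.real (A i) • g (x i) - ∫ y in ⋃ i, A i, g y ∂μ‖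
      = ‖∑ i, ∫ y in A i, (g (x i) - g y) ∂μ‖ := by
        rw [integral_iUnion_fintype hA hAd hgA, ← Finset.sum_sub_distrib]
        simp only [hpiece]
    _ ≤ ∑ i, C * μ.real (A i) := norm_sum_le_of_le _ fun i _ =>
        norm_setIntegral_le_of_norm_le_const (measure_lt_top μ _) (hC i)
    _ = C * μ.real (⋃ i, A i) := by rw [measureReal_iUnion_fintype hAd hA, Finset.mul_sum]

theorem setIntegral_sum_smul_dirac [MeasurableSingletonClass X] {c : ι → ENNReal}
    (hc : ∀ i, c i ≠ ⊤) {x : ι → X} {t : Set X} (hx : ∀ i, x i ∈ t) (g : X → E) :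
    ∫ y in t, g y ∂(∑ i, c i • Measure.dirac (x i)) = ∑ i, (c i).toReal • g (x i) := by
  have hrestrict : (∑ i, c i • Measure.dirac (x i)).restrict t = ∑ i, c i • Measure.dirac (x i) :=
    Measure.restrict_eq_self_of_ae_mem (by simp [ae_iff, hx])
  rw [hrestrict, integral_finsetSum_measure fun i _ =>
    (integrable_dirac (by simp)).smul_measure (hc i)]
  simp only [integral_smul_measure, integral_dirac]

end MeasureTheory

/-- Reads `α` as the base-`N` digits of a number below `N ^ k`, most significant digit `α 0`. -/
def nadicIndex (N k : ℕ) : (Fin k → Fin N) ≃ Fin (N ^ k) :=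
  (Equiv.arrowCongr Fin.revPerm (Equiv.refl (Fin N))).trans finFunctionFinEquiv

section NAdicIntervals

variable {N k : ℕ}

theorem xk_mul_pow (hN : 0 < N) (α : Fin k → Fin N) :
    xk N α * (N : ℝ) ^ k = (nadicIndex N k α : ℕ) := by
  have hN0 : (N : ℝ) ≠ 0 := by positivity
  simp only [nadicIndex, Equiv.trans_apply, finFunctionFinEquiv_apply, Equiv.arrowCongr_apply,
    Equiv.coe_refl, Function.comp_apply, id_eq, Fin.revPerm_symm, Fin.revPerm_apply]
  push_cast
  rw [xk, Finset.sum_mul, ← Equiv.sum_comp Fin.revPerm]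
  refine Finset.sum_congr rfl fun j _ => ?_
  have hpow : (N : ℝ) ^ (j : ℕ) * (N : ℝ) ^ ((Fin.rev j : ℕ) + 1) = (N : ℝ) ^ k := by
    rw [← pow_add, Fin.val_rev]; congr 1; omega
  simp only [Fin.revPerm_apply]
  rw [div_mul_eq_mul_div, div_eq_iff (pow_ne_zero _ hN0), mul_assoc, hpow]

theorem mem_Ik_iff (hN : 0 < N) {α : Fin k → Fin N} {y : ℝ} :
    y ∈ Ik N α ↔ ⌊y * (N : ℝ) ^ k⌋ = (nadicIndex N k α : ℤ) := by
  have hc : (0 : ℝ) < (N : ℝ) ^ k := by positivity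
  rw [Ik, Set.mem_Ico, Int.floor_eq_iff]
  push_cast
  rw [← xk_mul_pow hN α, show xk N α * (N : ℝ) ^ k + 1 = (xk N α + ((N : ℝ) ^ k)⁻¹) * (N : ℝ) ^ k
    by field_simp]
  exact and_congr (mul_le_mul_iff_left₀ hc).symm (mul_lt_mul_iff_left₀ hc).symm

theorem pairwise_disjoint_Ik (hN : 0 < N) :
    Pairwise (Function.onFun Disjoint fun α : Fin k → Fin N => Ik N α) := fun α β hne =>
  Set.disjoint_left.2 fun _ hα hβ => hne <| (nadicIndex N k).injective <| Fin.ext <| by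
    exact_mod_cast ((mem_Ik_iff hN).1 hα).symm.trans ((mem_Ik_iff hN).1 hβ)

theorem iUnion_Ik (hN : 0 < N) (k : ℕ) : ⋃ α : Fin k → Fin N, Ik N α = Set.Ico 0 1 := by
  have hc : (0 : ℝ) < (N : ℝ) ^ k := by positivity
  ext y
  simp only [Set.mem_iUnion, mem_Ik_iff hN, Set.mem_Ico]
  constructor
  · rintro ⟨α, hα⟩
    have h0 : 0 ≤ ⌊y * (N : ℝ) ^ k⌋ := hα ▸ Int.natCast_nonneg _
    have h1 : ⌊y * (N : ℝ) ^ k⌋ < ((N ^ k : ℕ) : ℤ) :=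
      hα ▸ by exact_mod_cast (nadicIndex N k α).is_lt
    rw [Int.floor_nonneg] at h0
    rw [Int.floor_lt] at h1
    push_cast at h1
    exact ⟨(mul_nonneg_iff_of_pos_right hc).1 h0, (mul_lt_iff_lt_one_left hc).1 h1⟩
  · rintro ⟨h0, h1⟩
    have hy0 : 0 ≤ y * (N : ℝ) ^ k := by positivity
    have hlt : ⌊y * (N : ℝ) ^ k⌋₊ < N ^ k := by
      rw [Nat.floor_lt hy0]; push_cast; exact (mul_lt_iff_lt_one_left hc).2 h1
    refine ⟨(nadicIndex N k).symm ⟨_, hlt⟩, ?_⟩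
    rw [Equiv.apply_symm_apply, Int.natCast_floor_eq_floor hy0]

theorem xk_mem_Ik (hN : 0 < N) (α : Fin k → Fin N) : xk N α ∈ Ik N α :=
  ⟨le_rfl, lt_add_of_pos_right _ (by positivity)⟩

theorem Ik_subset_Ico (hN : 0 < N) (α : Fin k → Fin N) : Ik N α ⊆ Set.Ico 0 1 :=
  iUnion_Ik hN k ▸ Set.subset_iUnion (fun β => Ik N β) α

theorem dist_xk_lt_of_mem_Ik {α : Fin k → Fin N} {y : ℝ} (hy : y ∈ Ik N α) :
    dist (xk N α) y < ((N : ℝ) ^ k)⁻¹ := by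
  rw [Real.dist_eq, abs_sub_lt_iff]
  constructor <;> linarith [hy.1, hy.2]

end NAdicIntervals

theorem integral_muk {N : ℕ} (hN : 0 < N) (S : Fin N → H →L[ℂ] H) (f : H) (k : ℕ) (ψ : ℝ → ℂ) :
    ∫ x in Set.Ico (0 : ℝ) 1, ψ x ∂(muk S f k)
      = ∑ α : Fin k → Fin N, ‖adjoint (Sw S α) f‖ ^ 2 • ψ (xk N α) := by
  rw [muk, setIntegral_sum_smul_dirac (fun _ => ENNReal.ofReal_ne_top)
    (fun α => Ik_subset_Ico hN α (xk_mem_Ik hN α))]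
  simp only [ENNReal.toReal_ofReal (sq_nonneg _)]

namespace IsSpectralMeasureR

variable {N : ℕ} {S : Fin N → H →L[ℂ] H} {g : H} {μ : Measure ℝ}

theorem isFiniteMeasure (hμ : IsSpectralMeasureR S g μ) : IsFiniteMeasure μ :=
  ⟨hμ.2.1 ▸ ENNReal.ofReal_lt_top⟩

theorem measureReal_univ (hμ : IsSpectralMeasureR S g μ) : μ.real Set.univ = ‖g‖ ^ 2 := by
  rw [measureReal_def, hμ.2.1, ENNReal.toReal_ofReal (sq_nonneg _)]

theorem measureReal_Ik (hμ : IsSpectralMeasureR S g μ) {k : ℕ} (hk : 1 ≤ k)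
    (α : Fin k → Fin N) : μ.real (Ik N α) = ‖adjoint (Sw S α) g‖ ^ 2 := by
  rw [measureReal_def, hμ.2.2 k hk α, ENNReal.toReal_ofReal (sq_nonneg _)]

theorem norm_integral_muk_sub_le (hN : 0 < N) (hμ : IsSpectralMeasureR S g μ) {k : ℕ}
    (hk : 1 ≤ k) {ψ : ℝ → ℂ} (hψ : IntegrableOn ψ (Set.Ico 0 1) μ) {C : ℝ}
    (hC : ∀ x ∈ Set.Ico (0 : ℝ) 1, ∀ y ∈ Set.Ico (0 : ℝ) 1,
      dist x y < ((N : ℝ) ^ k)⁻¹ → dist (ψ x) (ψ y) ≤ C) :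
    ‖∫ x in Set.Ico 0 1, ψ x ∂(muk S g k) - ∫ x in Set.Ico 0 1, ψ x ∂μ‖
      ≤ C * μ.real (Set.Ico 0 1) := by
  have := hμ.isFiniteMeasure
  have hclose : ∀ α : Fin k → Fin N, ∀ y ∈ Ik N α, ‖ψ (xk N α) - ψ y‖ ≤ C := fun α y hy =>
    dist_eq_norm (ψ _) (ψ y) ▸ hC _ (Ik_subset_Ico hN α (xk_mem_Ik hN α)) _
      (Ik_subset_Ico hN α hy) (dist_xk_lt_of_mem_Ik hy)
  rw [integral_muk hN]
  simp_rw [← hμ.measureReal_Ik hk]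
  rw [← iUnion_Ik hN k] at hψ ⊢
  exact norm_sum_measureReal_smul_sub_setIntegral_le (fun _ => measurableSet_Ico)
    (pairwise_disjoint_Ik hN) hψ _ hclose

end IsSpectralMeasureR

theorem stmt_8_general {N : ℕ} (hN : 2 ≤ N) (S : Fin N → H →L[ℂ] H)
    (f : H) (hf : ‖f‖ = 1)
    (μ : Measure ℝ) (hμ : IsSpectralMeasureR S f μ) :
    ∀ ψ : ℝ → ℂ, ContinuousOn ψ (Set.Icc (0:ℝ) 1) →
      Filter.Tendsto (fun k : ℕ => ∫ x in Set.Ico (0:ℝ) 1, ψ x ∂(muk S f k))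
        Filter.atTop (nhds (∫ x in Set.Ico (0:ℝ) 1, ψ x ∂μ)) := by
  intro ψ hψ
  have := hμ.isFiniteMeasure
  have hint : IntegrableOn ψ (Set.Ico 0 1) μ :=
    (hψ.integrableOn_compact isCompact_Icc).mono_set Set.Ico_subset_Icc_self
  have hmass : μ.real (Set.Ico 0 1) ≤ 1 := by
    simpa [hμ.measureReal_univ, hf] using
      measureReal_mono (μ := μ) (Set.subset_univ (Set.Ico (0 : ℝ) 1))
  have hmesh : Filter.Tendsto (fun k : ℕ => ((N : ℝ) ^ k)⁻¹) Filter.atTop (nhds 0) :=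
    tendsto_inv_atTop_zero.comp (tendsto_pow_atTop_atTop_of_one_lt (by exact_mod_cast hN))
  refine Metric.tendsto_nhds.2 fun ε hε => ?_
  obtain ⟨δ, hδ, hψδ⟩ := Metric.uniformContinuousOn_iff.1
    (isCompact_Icc.uniformContinuousOn_of_continuous hψ) (ε / 2) (half_pos hε)
  filter_upwards [Filter.eventually_ge_atTop 1, hmesh.eventually (gt_mem_nhds hδ)]
    with k hk hkδ
  calc dist _ _ ≤ ε / 2 * μ.real (Set.Ico 0 1) := by
        rw [dist_eq_norm]
        exact hμ.norm_integral_muk_sub_le (by omega) hk hint fun x hx y hy hxy =>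
          (hψδ x (Set.Ico_subset_Icc_self hx) y (Set.Ico_subset_Icc_self hy) (hxy.trans hkδ)).le
    _ ≤ ε / 2 * 1 := by gcongr
    _ < ε := by linarith

/-- The atomic measures `μ_f^{(k)}` converge weakly to the spectral measure `μ_f`:
for every continuous `ψ : [0,1] → ℂ`, `∫ψ dμ_f^{(k)} → ∫ψ dμ_f`. -/
theorem stmt_8 {N : ℕ} (hN : 2 ≤ N) (S : Fin N → H →L[ℂ] H) (hS : CuntzRep S)
    (f : H) (hf : ‖f‖ = 1)
    (μ : Measure ℝ) (hμ : IsSpectralMeasureR S f μ) :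
    ∀ ψ : ℝ → ℂ, ContinuousOn ψ (Set.Icc (0:ℝ) 1) →
      Filter.Tendsto (fun k : ℕ => ∫ x in Set.Ico (0:ℝ) 1, ψ x ∂(muk S f k))
        Filter.atTop (nhds (∫ x in Set.Ico (0:ℝ) 1, ψ x ∂μ)) :=
  stmt_8_general hN S f hf μ hμ
end

section
/- Let (S_j)_{j=0}^{N-1} be a representation of the Cuntz algebra 𝒪_N on H, let (σ_i)_{i=0}^{N-1} be a complete and non-overlapping iterated function system on a compact metric space X, and assume the von Neumann algebra 𝔄 generated by {S_α S_α^* : α a multi-index} is maximal abelian. Let f ∈ H with ‖f‖ = 1 be cyclic for 𝔄 (i.e. {A f : A ∈ 𝔄} is dense in H), and let μ_f be the spectral measure of f. Then for every g ∈ H, any spectral measure μ_g of g is absolutely continuous with respect to μ_f. -/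
open MeasureTheory ContinuousLinearMap
open scoped InnerProductSpace

variable {H : Type*} [NormedAddCommGroup H] [InnerProductSpace ℂ H] [CompleteSpace H]
variable {X : Type*} [MetricSpace X] [CompactSpace X] [MeasurableSpace X] [BorelSpace X]

/-- The composition `σ_{i_1} ∘ ⋯ ∘ σ_{i_k}` for a multi-index `i`. -/
def compIFS {N : ℕ} (σ : Fin N → X → X) {k : ℕ} (i : Fin k → Fin N) : X → X :=
  (List.ofFn fun j => σ (i j)).foldr (· ∘ ·) id

/-- `A_k(i) = σ_{i_1} ∘ ⋯ ∘ σ_{i_k}(X)`. -/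
def Ak {N : ℕ} (σ : Fin N → X → X) {k : ℕ} (i : Fin k → Fin N) : Set X :=
  Set.range (compIFS σ i)

/-- The IFS is complete if the diameters of `A_k(i_1,…,i_k)` tend to `0` along every
infinite word `(i_1, i_2, …)`. -/
def CompleteIFS {N : ℕ} (σ : Fin N → X → X) : Prop :=
  ∀ s : ℕ → Fin N,
    Filter.Tendsto (fun k : ℕ => Metric.diam (Ak σ fun j : Fin k => s j))
      Filter.atTop (nhds 0)

/-- The IFS is non-overlapping if for each `k` the sets `A_k(i)` are pairwise disjoint. -/
def NonOverlapping {N : ℕ} (σ : Fin N → X → X) : Prop :=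
  ∀ k : ℕ, ∀ i i' : Fin k → Fin N, i ≠ i' → Disjoint (Ak σ i) (Ak σ i')

/-- A Borel measure `μ` on `X` is a spectral measure of `g` if `μ(X) = ‖g‖²`
and `μ(A_k(i)) = ‖S_i^* g‖²` for every `k ≥ 1` and multi-index `i`. -/
def IsSpectralMeasureX {N : ℕ} (S : Fin N → H →L[ℂ] H) (σ : Fin N → X → X) (g : H)
    (μ : Measure X) : Prop :=
  μ Set.univ = ENNReal.ofReal (‖g‖ ^ 2) ∧
    ∀ k : ℕ, 1 ≤ k → ∀ i : Fin k → Fin N,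
      μ (Ak σ i) = ENNReal.ofReal (‖adjoint (Sw S i) g‖ ^ 2)

/-- The set of projections `S_α S_α^*`, `α` a multi-index. -/
noncomputable def projSet {N : ℕ} (S : Fin N → H →L[ℂ] H) : Set (H →L[ℂ] H) :=
  {A | ∃ k : ℕ, 1 ≤ k ∧ ∃ α : Fin k → Fin N, A = Sw S α ∘L adjoint (Sw S α)}

/-- The von Neumann algebra generated by the projections `S_α S_α^*`, realized as the
double commutant of that (self-adjoint) family. -/
noncomputable def vN {N : ℕ} (S : Fin N → H →L[ℂ] H) : Set (H →L[ℂ] H) :=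
  Set.centralizer (Set.centralizer (projSet S))

/-!
Since `𝔄` is maximal abelian, every `B ∈ 𝔄` commutes with the projections `S_α S_α^*`, whence
`‖S_α^* (B f)‖ ≤ ‖B‖ ‖S_α^* f‖`. Both spectral measures live on the points having an address at
every level, and by completeness such a point of an open set `U` lies in a cylinder `A_k(α) ⊆ U`.
Summing over the disjoint cylinders of one level inside `U` gives
`μ_g(U) ≤ 2‖B‖² μ_f(U) + 2‖g - B f‖²`. Outer regularity of `μ_f` turns this into
`μ_g(E) ≤ 2‖g - B f‖²` for every `μ_f`-null `E`, and cyclicity of `f` makes the right side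
arbitrarily small.
-/

section Cuntz

variable {N : ℕ} {S : Fin N → H →L[ℂ] H}

omit [CompleteSpace H] in
lemma Sw_zero (S : Fin N → H →L[ℂ] H) (α : Fin 0 → Fin N) : Sw S α = 1 := by
  simp [Sw]

omit [CompleteSpace H] in
lemma Sw_cons (S : Fin N → H →L[ℂ] H) {k : ℕ} (j : Fin N) (β : Fin k → Fin N) :
    Sw S (Fin.cons j β) = S j ∘L Sw S β := by
  simp only [Sw, List.ofFn_succ, List.prod_cons, Fin.cons_zero, Fin.cons_succ]
  rfl

lemma CuntzRep.adjoint_comp_self (hS : CuntzRep S) (j : Fin N) : adjoint (S j) ∘L S j = 1 := by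
  simpa using hS.1 j j

lemma CuntzRep.norm_Sw_apply (hS : CuntzRep S) {k : ℕ} (α : Fin k → Fin N) (x : H) :
    ‖Sw S α x‖ = ‖x‖ := by
  induction k generalizing x with
  | zero => simp [Sw_zero]
  | succ k ih =>
    rw [← Fin.cons_self_tail α, Sw_cons, ContinuousLinearMap.comp_apply,
      (norm_map_iff_adjoint_comp_self _).2 (hS.adjoint_comp_self _), ih]

lemma CuntzRep.sum_norm_adjoint_sq (hS : CuntzRep S) (x : H) :
    ∑ j, ‖adjoint (S j) x‖ ^ 2 = ‖x‖ ^ 2 := by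
  have hx : ∑ j, (S j ∘L adjoint (S j)) x = x := by
    rw [← sum_apply, hS.2, one_apply_eq_self]
  calc ∑ j, ‖adjoint (S j) x‖ ^ 2
      = RCLike.re ⟪x, ∑ j, (S j ∘L adjoint (S j)) x⟫_ℂ := by
        simp only [apply_norm_sq_eq_inner_adjoint_right, adjoint_adjoint, inner_sum, map_sum]
    _ = ‖x‖ ^ 2 := by rw [hx, inner_self_eq_norm_sq]

lemma CuntzRep.sum_norm_adjoint_Sw_sq (hS : CuntzRep S) (k : ℕ) (x : H) :
    ∑ α : Fin k → Fin N, ‖adjoint (Sw S α) x‖ ^ 2 = ‖x‖ ^ 2 := by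
  induction k generalizing x with
  | zero => simp [Sw_zero, adjoint_one]
  | succ k ih =>
    rw [← (Fin.consEquiv fun _ => Fin N).sum_comp, Fintype.sum_prod_type,
      ← hS.sum_norm_adjoint_sq x]
    refine Finset.sum_congr rfl fun j _ => ?_
    simp only [Fin.consEquiv, Equiv.coe_fn_mk, Sw_cons, adjoint_comp,
      ContinuousLinearMap.comp_apply, ih]

lemma CuntzRep.sum_norm_adjoint_Sw_sq_le (hS : CuntzRep S) {k : ℕ}
    (T : Finset (Fin k → Fin N)) (x : H) :
    ∑ α ∈ T, ‖adjoint (Sw S α) x‖ ^ 2 ≤ ‖x‖ ^ 2 :=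
  hS.sum_norm_adjoint_Sw_sq k x ▸
    Finset.sum_le_sum_of_subset_of_nonneg (Finset.subset_univ T) fun _ _ _ => sq_nonneg _

end Cuntz

section Commute

variable {K : Type*} [NormedAddCommGroup K] [InnerProductSpace ℂ K] [CompleteSpace K]

lemma norm_adjoint_apply_le_of_commute {V : K →L[ℂ] H} {B : H →L[ℂ] H}
    (hV : ∀ x, ‖V x‖ = ‖x‖) (hB : Commute B (V ∘L adjoint V)) (f : H) :
    ‖adjoint V (B f)‖ ≤ ‖B‖ * ‖adjoint V f‖ :=
  calc ‖adjoint V (B f)‖ = ‖V (adjoint V (B f))‖ := (hV _).symm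
    _ = ‖B (V (adjoint V f))‖ := congrArg _ (DFunLike.congr_fun hB.eq f).symm
    _ ≤ ‖B‖ * ‖V (adjoint V f)‖ := B.le_opNorm _
    _ = ‖B‖ * ‖adjoint V f‖ := by rw [hV]

end Commute

lemma commute_of_mem_vN {N : ℕ} {S : Fin N → H →L[ℂ] H} (hmax : vN S = Set.centralizer (vN S))
    {B P : H →L[ℂ] H} (hB : B ∈ vN S) (hP : P ∈ projSet S) : Commute B P :=
  ((hmax ▸ hB : B ∈ Set.centralizer (vN S)) P (Set.subset_centralizer_centralizer hP)).symm

lemma CuntzRep.sum_norm_adjoint_Sw_sq_le_of_commute {N : ℕ} {S : Fin N → H →L[ℂ] H}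
    (hS : CuntzRep S) {k : ℕ} (T : Finset (Fin k → Fin N)) {B : H →L[ℂ] H}
    (hB : ∀ α ∈ T, Commute B (Sw S α ∘L adjoint (Sw S α))) (f g : H) :
    ∑ α ∈ T, ‖adjoint (Sw S α) g‖ ^ 2
      ≤ 2 * ‖B‖ ^ 2 * ∑ α ∈ T, ‖adjoint (Sw S α) f‖ ^ 2 + 2 * ‖g - B f‖ ^ 2 := by
  have hterm : ∀ α ∈ T, ‖adjoint (Sw S α) g‖ ^ 2
      ≤ 2 * ‖B‖ ^ 2 * ‖adjoint (Sw S α) f‖ ^ 2 + 2 * ‖adjoint (Sw S α) (g - B f)‖ ^ 2 := by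
    intro α hα
    have hle : ‖adjoint (Sw S α) g‖ ≤ ‖B‖ * ‖adjoint (Sw S α) f‖ + ‖adjoint (Sw S α) (g - B f)‖ :=
      calc ‖adjoint (Sw S α) g‖ = ‖adjoint (Sw S α) (B f) + adjoint (Sw S α) (g - B f)‖ := by
            rw [← map_add, add_sub_cancel]
        _ ≤ _ := norm_add_le _ _
        _ ≤ _ := by
            gcongr
            exact norm_adjoint_apply_le_of_commute (hS.norm_Sw_apply α) (hB α hα) f
    calc ‖adjoint (Sw S α) g‖ ^ 2
        ≤ (‖B‖ * ‖adjoint (Sw S α) f‖ + ‖adjoint (Sw S α) (g - B f)‖) ^ 2 := by gcongr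
      _ ≤ 2 * ((‖B‖ * ‖adjoint (Sw S α) f‖) ^ 2 + ‖adjoint (Sw S α) (g - B f)‖ ^ 2) := add_sq_le
      _ = _ := by ring
  calc ∑ α ∈ T, ‖adjoint (Sw S α) g‖ ^ 2
      ≤ ∑ α ∈ T, (2 * ‖B‖ ^ 2 * ‖adjoint (Sw S α) f‖ ^ 2
          + 2 * ‖adjoint (Sw S α) (g - B f)‖ ^ 2) := Finset.sum_le_sum hterm
    _ = 2 * ‖B‖ ^ 2 * ∑ α ∈ T, ‖adjoint (Sw S α) f‖ ^ 2
          + 2 * ∑ α ∈ T, ‖adjoint (Sw S α) (g - B f)‖ ^ 2 := by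
        rw [Finset.sum_add_distrib, Finset.mul_sum, Finset.mul_sum]
    _ ≤ _ := by gcongr; exact hS.sum_norm_adjoint_Sw_sq_le T _

section IFS

variable {Y : Type*} {N : ℕ} {σ : Fin N → Y → Y}

lemma compIFS_snoc {k : ℕ} (i : Fin (k + 1) → Fin N) :
    compIFS σ i = compIFS σ (fun j : Fin k => i j.castSucc) ∘ σ (i (Fin.last k)) := by
  simp only [compIFS, List.ofFn_succ', List.concat_eq_append, List.foldr_append,
    List.foldr_cons, List.foldr_nil, Function.comp_id]
  generalize List.ofFn _ = l
  induction l with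
  | nil => rfl
  | cons f l ih => simp only [List.foldr_cons, ih]; rfl

lemma Ak_zero (i : Fin 0 → Fin N) : Ak σ i = Set.univ := by
  simp [Ak, compIFS]

lemma Ak_subset_Ak_castLE {m k : ℕ} (h : m ≤ k) (i : Fin k → Fin N) :
    Ak σ i ⊆ Ak σ (fun j : Fin m => i (Fin.castLE h j)) := by
  induction k, h using Nat.le_induction with
  | base => simp
  | succ k h ih =>
    calc Ak σ i ⊆ Ak σ (fun j : Fin k => i j.castSucc) := by
          rw [Ak, Ak, compIFS_snoc]
          exact Set.range_comp_subset_range _ _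
      _ ⊆ _ := ih _

lemma eq_of_mem_Ak (hno : NonOverlapping σ) {k : ℕ} {i i' : Fin k → Fin N} {x : Y}
    (hx : x ∈ Ak σ i) (hx' : x ∈ Ak σ i') : i = i' := by
  by_contra h
  exact Set.disjoint_left.1 (hno k i i' h) hx hx'

def Addressable (σ : Fin N → Y → Y) (x : Y) : Prop :=
  ∀ k, ∃ i : Fin k → Fin N, x ∈ Ak σ i

lemma Addressable.exists_seq (hno : NonOverlapping σ) {x : Y} (hx : Addressable σ x) :
    ∃ s : ℕ → Fin N, ∀ k, x ∈ Ak σ (fun j : Fin k => s j) := by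
  choose w hw using hx
  have hprefix : ∀ {m k} (h : m ≤ k), (fun j : Fin m => w k (Fin.castLE h j)) = w m :=
    fun h => eq_of_mem_Ak hno (Ak_subset_Ak_castLE h _ (hw _)) (hw _)
  refine ⟨fun n => w (n + 1) (Fin.last n), fun k => ?_⟩
  convert hw k using 2
  funext j
  exact (congrFun (hprefix (m := j + 1) j.isLt) (Fin.last j)).symm

lemma Addressable.exists_Ak_subset_succ (hno : NonOverlapping σ) {x : Y}
    (hx : Addressable σ x) {U : Set Y} {k : ℕ} {i : Fin k → Fin N} (hxi : x ∈ Ak σ i)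
    (hiU : Ak σ i ⊆ U) : ∃ i' : Fin (k + 1) → Fin N, x ∈ Ak σ i' ∧ Ak σ i' ⊆ U := by
  obtain ⟨i', hxi'⟩ := hx (k + 1)
  have hprefix := eq_of_mem_Ak hno (Ak_subset_Ak_castLE k.le_succ _ hxi') hxi
  exact ⟨i', hxi', (Ak_subset_Ak_castLE k.le_succ i').trans (hprefix ▸ hiU)⟩

lemma Addressable.exists_Ak_subset [MetricSpace Y] [CompactSpace Y]
    (hcomp : CompleteIFS σ) (hno : NonOverlapping σ) {x : Y} (hx : Addressable σ x)
    {U : Set Y} (hU : IsOpen U) (hxU : x ∈ U) :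
    ∃ k, ∃ i : Fin (k + 1) → Fin N, x ∈ Ak σ i ∧ Ak σ i ⊆ U := by
  obtain ⟨s, hs⟩ := hx.exists_seq hno
  obtain ⟨ε, hε, hball⟩ := Metric.isOpen_iff.1 hU x hxU
  obtain ⟨k, hk⟩ := (Metric.tendsto_atTop.1 (hcomp s)) ε hε
  refine ⟨k, fun j => s j, hs _, fun y hy => hball ?_⟩
  calc dist y x ≤ Metric.diam (Ak σ fun j : Fin (k + 1) => s j) :=
        Metric.dist_le_diam_of_mem Metric.isBounded_of_compactSpace hy (hs _)
    _ < ε := (le_abs_self _).trans_lt (by simpa [Real.dist_eq] using hk (k + 1) k.le_succ)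

lemma continuous_compIFS [TopologicalSpace Y] (hcont : ∀ i, Continuous (σ i)) {k : ℕ}
    (i : Fin k → Fin N) : Continuous (compIFS σ i) := by
  induction k with
  | zero => exact continuous_id
  | succ k ih =>
    rw [compIFS_snoc]
    exact (ih _).comp (hcont _)

lemma measurableSet_Ak [TopologicalSpace Y] [T2Space Y] [CompactSpace Y] [MeasurableSpace Y]
    [OpensMeasurableSpace Y] (hcont : ∀ i, Continuous (σ i)) {k : ℕ} (i : Fin k → Fin N) :
    MeasurableSet (Ak σ i) :=
  (isCompact_range (continuous_compIFS hcont i)).isClosed.measurableSet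

end IFS

namespace IsSpectralMeasureX

variable {N : ℕ} {S : Fin N → H →L[ℂ] H} {g : H}

lemma isFiniteMeasure {Y : Type*} [MeasurableSpace Y] {σ : Fin N → Y → Y} {μ : Measure Y}
    (hμ : IsSpectralMeasureX S σ g μ) : IsFiniteMeasure μ :=
  ⟨by rw [hμ.1]; exact ENNReal.ofReal_lt_top⟩

variable {σ : Fin N → X → X} {μ : Measure X}

lemma measure_biUnion_Ak (hμ : IsSpectralMeasureX S σ g μ) (hcont : ∀ i, Continuous (σ i))
    (hno : NonOverlapping σ) {k : ℕ} (hk : 1 ≤ k) (T : Finset (Fin k → Fin N)) :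
    μ (⋃ i ∈ T, Ak σ i) = ENNReal.ofReal (∑ i ∈ T, ‖adjoint (Sw S i) g‖ ^ 2) := by
  rw [measure_biUnion_finset (fun i _ i' _ h => hno k i i' h)
      (fun i _ => measurableSet_Ak hcont i),
    ENNReal.ofReal_sum_of_nonneg fun _ _ => sq_nonneg _]
  exact Finset.sum_congr rfl fun i _ => hμ.2 k hk i

lemma ae_addressable (hμ : IsSpectralMeasureX S σ g μ) (hS : CuntzRep S)
    (hcont : ∀ i, Continuous (σ i)) (hno : NonOverlapping σ) :
    ∀ᵐ x ∂μ, Addressable σ x := by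
  have := hμ.isFiniteMeasure
  refine ae_all_iff.2 fun k => ?_
  rcases Nat.eq_zero_or_pos k with rfl | hk
  · exact Filter.Eventually.of_forall fun x => ⟨Fin.elim0, by simp [Ak_zero]⟩
  have hfull : μ (⋃ i : Fin k → Fin N, Ak σ i) = μ Set.univ := by
    simpa [hμ.1, hS.sum_norm_adjoint_Sw_sq] using hμ.measure_biUnion_Ak hcont hno hk Finset.univ
  simpa using (ae_iff_measure_eq (p := (· ∈ ⋃ i : Fin k → Fin N, Ak σ i))
    (MeasurableSet.iUnion (measurableSet_Ak hcont)).nullMeasurableSet).2 hfull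

end IsSpectralMeasureX

lemma measure_le_of_forall_isOpen {Y : Type*} [MeasurableSpace Y] [TopologicalSpace Y]
    {μ ν : Measure Y} [ν.OuterRegular] {c d : ENNReal} (hc : c ≠ ⊤)
    (h : ∀ U, IsOpen U → μ U ≤ c * ν U + d) {E : Set Y} (hE : ν E = 0) : μ E ≤ d := by
  refine ENNReal.le_of_forall_pos_le_add fun η hη _ => ?_
  obtain ⟨U, hEU, hU, hνU⟩ := Set.exists_isOpen_lt_of_lt E (η / c)
    (hE ▸ ENNReal.div_pos_iff.2 ⟨by exact_mod_cast hη.ne', hc⟩)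
  calc μ E ≤ μ U := measure_mono hEU
    _ ≤ c * (η / c) + d := by grw [h U hU, hνU.le]
    _ ≤ d + η := by rw [add_comm]; grw [ENNReal.mul_div_le]

lemma measure_isOpen_le {N : ℕ} {S : Fin N → H →L[ℂ] H} (hS : CuntzRep S)
    (hmax : vN S = Set.centralizer (vN S)) {σ : Fin N → X → X}
    (hcont : ∀ i, Continuous (σ i)) (hcomp : CompleteIFS σ) (hno : NonOverlapping σ)
    {f g : H} {μf μg : Measure X} (hμf : IsSpectralMeasureX S σ f μf)
    (hμg : IsSpectralMeasureX S σ g μg) {B : H →L[ℂ] H} (hB : B ∈ vN S) {U : Set X}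
    (hU : IsOpen U) :
    μg U ≤ ENNReal.ofReal (2 * ‖B‖ ^ 2) * μf U + ENNReal.ofReal (2 * ‖g - B f‖ ^ 2) := by
  classical
  set W : ℕ → Set X := fun k =>
    {x | Addressable σ x ∧ ∃ i : Fin (k + 1) → Fin N, x ∈ Ak σ i ∧ Ak σ i ⊆ U}
  have hW_mono : Monotone W := monotone_nat_of_le_succ fun k x ⟨hx, i, hxi, hiU⟩ =>
    ⟨hx, hx.exists_Ak_subset_succ hno hxi hiU⟩
  have hUW : μg U ≤ μg (⋃ k, W k) := by
    refine measure_mono_ae ?_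
    filter_upwards [hμg.ae_addressable hS hcont hno] with x hx hxU
    exact Set.mem_iUnion.2 (by simpa [W, hx] using hx.exists_Ak_subset hcomp hno hU hxU)
  have hW_le : ∀ k, μg (W k)
      ≤ ENNReal.ofReal (2 * ‖B‖ ^ 2) * μf U + ENNReal.ofReal (2 * ‖g - B f‖ ^ 2) := by
    intro k
    set T := Finset.univ.filter fun i : Fin (k + 1) → Fin N => Ak σ i ⊆ U
    have hcomm : ∀ α ∈ T, Commute B (Sw S α ∘L adjoint (Sw S α)) :=
      fun α _ => commute_of_mem_vN hmax hB ⟨k + 1, le_add_self, α, rfl⟩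
    calc μg (W k) ≤ μg (⋃ i ∈ T, Ak σ i) := measure_mono fun x ⟨_, i, hxi, hiU⟩ =>
          Set.mem_biUnion (by simpa [T] using hiU) hxi
      _ = ENNReal.ofReal (∑ i ∈ T, ‖adjoint (Sw S i) g‖ ^ 2) :=
          hμg.measure_biUnion_Ak hcont hno le_add_self T
      _ ≤ ENNReal.ofReal (2 * ‖B‖ ^ 2 * ∑ i ∈ T, ‖adjoint (Sw S i) f‖ ^ 2
            + 2 * ‖g - B f‖ ^ 2) :=
          ENNReal.ofReal_le_ofReal (hS.sum_norm_adjoint_Sw_sq_le_of_commute T hcomm f g)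
      _ = ENNReal.ofReal (2 * ‖B‖ ^ 2) * μf (⋃ i ∈ T, Ak σ i)
            + ENNReal.ofReal (2 * ‖g - B f‖ ^ 2) := by
          rw [hμf.measure_biUnion_Ak hcont hno le_add_self T, ← ENNReal.ofReal_mul (by positivity),
            ← ENNReal.ofReal_add (by positivity) (by positivity)]
      _ ≤ _ := by
          gcongr
          exact Set.iUnion₂_subset fun i hi => (Finset.mem_filter.1 hi).2
  calc μg U ≤ μg (⋃ k, W k) := hUW
    _ = ⨆ k, μg (W k) := hW_mono.measure_iUnion
    _ ≤ _ := iSup_le hW_le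

theorem stmt_15_general {N : ℕ} (S : Fin N → H →L[ℂ] H) (hS : CuntzRep S)
    (σ : Fin N → X → X) (hcont : ∀ i, Continuous (σ i))
    (hcomp : CompleteIFS σ) (hno : NonOverlapping σ)
    (hmax : vN S = Set.centralizer (vN S))
    (f : H)
    (hcyc : Dense ((fun A : H →L[ℂ] H => A f) '' vN S))
    (μf : Measure X) (hμf : IsSpectralMeasureX S σ f μf) :
    ∀ (g : H) (μg : Measure X), IsSpectralMeasureX S σ g μg → μg ≪ μf := by
  intro g μg hμg E hE
  have := hμf.isFiniteMeasure
  have hbound : ∀ h ∈ (fun A : H →L[ℂ] H => A f) '' vN S,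
      μg E ≤ ENNReal.ofReal (2 * ‖g - h‖ ^ 2) := by
    rintro _ ⟨B, hB, rfl⟩
    exact measure_le_of_forall_isOpen ENNReal.ofReal_ne_top
      (fun U hU => measure_isOpen_le hS hmax hcont hcomp hno hμf hμg hB hU) hE
  have hclosed : IsClosed {h : H | μg E ≤ ENNReal.ofReal (2 * ‖g - h‖ ^ 2)} :=
    isClosed_le continuous_const (ENNReal.continuous_ofReal.comp (by fun_prop))
  simpa using hcyc.induction (P := fun h => μg E ≤ ENNReal.ofReal (2 * ‖g - h‖ ^ 2))
    hbound hclosed g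

/-- If `𝔄` is maximal abelian and `f` is a cyclic unit vector with spectral measure
`μ_f`, then every spectral measure `μ_g`, `g ∈ H`, is absolutely continuous with respect
to `μ_f`. -/
theorem stmt_15 {N : ℕ} (hN : 2 ≤ N) (S : Fin N → H →L[ℂ] H) (hS : CuntzRep S)
    (σ : Fin N → X → X) (hcont : ∀ i, Continuous (σ i))
    (hcomp : CompleteIFS σ) (hno : NonOverlapping σ)
    (hmax : vN S = Set.centralizer (vN S))
    (f : H) (hf : ‖f‖ = 1)
    (hcyc : Dense ((fun A : H →L[ℂ] H => A f) '' vN S))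
    (μf : Measure X) (hμf : IsSpectralMeasureX S σ f μf) :
    ∀ (g : H) (μg : Measure X), IsSpectralMeasureX S σ g μg → μg ≪ μf :=
  stmt_15_general S hS σ hcont hcomp hno hmax f hcyc μf hμf
end
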